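/- Classical Buckingham Π-theorem, rank-deficient case: Let A be a real m×n matrix with columns α₁ᵀ,…,αₙᵀ, r := rank(A) < n, k := n−r. Let β ∈ ℝ^m, y ∈ ℝⁿ with Ayᵀ = βᵀ, and F ∈ S(A,β). Fix a basis (x₁ᵀ,…,x_kᵀ) of ker(A), let X be the k×n matrix with rows x₁,…,x_k, define πₛ(u) := u^{xₛ}, ψ(w) := exp(X†·log(w)ᵀ), and G(w) := F(ψ(w))/ψ(w)^y. Then F(v) = G(π₁(v),…,π_k(v))·v^y for every v ∈ (ℝ_{>0})ⁿ. -/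

import Mathlib

open Matrix

/-- `v^y := ∏ i, v i ^ y i` (real powers). -/
noncomputable def ppow {ι : Type*} [Fintype ι] (v y : ι → ℝ) : ℝ := ∏ i, v i ^ y i

/-- The scaled vector `(v₁c^{α₁}, …, vₙc^{αₙ})`, where `αⱼᵀ` are the columns of `A`
and `c^α := ∏ i, c i ^ α i`. -/
noncomputable def scale {m n : ℕ} (A : Matrix (Fin m) (Fin n) ℝ) (c : Fin m → ℝ)
    (v : Fin n → ℝ) : Fin n → ℝ := fun j => v j * ppow c (fun i => A i j)

/-- `F ∈ S(A,β,ε)`: `|F(v₁c^{α₁},…,vₙc^{αₙ}) − F(v)c^β| ≤ ε|F(v)|c^β` for all positive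
`v ∈ ℝⁿ`, `c ∈ ℝ^m`. `S(A,β) := S(A,β,0)`. -/
def memS {m n : ℕ} (A : Matrix (Fin m) (Fin n) ℝ) (β : Fin m → ℝ) (ε : ℝ)
    (F : (Fin n → ℝ) → ℝ) : Prop :=
  ∀ v : Fin n → ℝ, (∀ j, 0 < v j) → ∀ c : Fin m → ℝ, (∀ i, 0 < c i) →
    |F (scale A c v) - F v * ppow c β| ≤ ε * |F v| * ppow c β

/-!
In logarithmic coordinates `L = log v`, the invariance `F ∈ S(A,β)` reads
`F (exp (L + Aᵀz)) = F (exp L) · exp (z ⬝ β)`. Because `X Xd X = X`, the matrix `P = Xd X` is an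
idempotent of rank `k = n - rank A` killing `range Aᵀ`; hence `ker P = range Aᵀ` and
`L - P L = Aᵀ z` for some `z`. Since `log ψ(π(v)) = Xd X L = P L`, invariance gives
`F v = F (ψ (π v)) · exp (z ⬝ β)`, and `z ⬝ β = z ⬝ A y = (L - P L) ⬝ y` turns `exp (z ⬝ β)` into
`v^y / ψ(π(v))^y`.
-/

section ppow

variable {ι : Type*} [Fintype ι]

lemma ppow_exp (a y : ι → ℝ) : ppow (fun i => Real.exp (a i)) y = Real.exp (a ⬝ᵥ y) := by
  simp only [ppow, dotProduct, Real.exp_sum]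
  exact Finset.prod_congr rfl fun i _ => by
    rw [Real.rpow_def_of_pos (Real.exp_pos _), Real.log_exp]

lemma log_ppow {v : ι → ℝ} (hv : ∀ i, 0 < v i) (y : ι → ℝ) :
    Real.log (ppow v y) = y ⬝ᵥ fun i => Real.log (v i) := by
  rw [ppow, Real.log_prod fun i _ => (Real.rpow_pos_of_pos (hv i) _).ne']
  exact Finset.sum_congr rfl fun i _ => Real.log_rpow (hv i) _

end ppow

lemma scale_exp {m n : ℕ} (A : Matrix (Fin m) (Fin n) ℝ) (z : Fin m → ℝ) (a : Fin n → ℝ) :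
    scale A (fun i => Real.exp (z i)) (fun j => Real.exp (a j)) =
      fun j => Real.exp (a j + (z ᵥ* A) j) := by
  funext j
  rw [scale, ppow_exp, Real.exp_add]
  rfl

lemma apply_exp_add_vecMul {m n : ℕ} {A : Matrix (Fin m) (Fin n) ℝ} {β : Fin m → ℝ}
    {F : (Fin n → ℝ) → ℝ}
    (hF : ∀ v : Fin n → ℝ, (∀ j, 0 < v j) → ∀ c : Fin m → ℝ, (∀ i, 0 < c i) →
      F (scale A c v) = F v * ppow c β) (a : Fin n → ℝ) (z : Fin m → ℝ) :
    F (fun j => Real.exp (a j + (z ᵥ* A) j)) = F (fun j => Real.exp (a j)) * Real.exp (z ⬝ᵥ β) := by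
  rw [← scale_exp, hF _ (fun j => Real.exp_pos _) _ (fun i => Real.exp_pos _), ppow_exp]

namespace Matrix

variable {K : Type*} [Field K] {m n k : Type*} [Fintype m] [Fintype n] [Fintype k]

lemma rank_mul_eq_of_mul_mul_eq {X : Matrix k n K} {Xd : Matrix n k K} (h : X * Xd * X = X) :
    (Xd * X).rank = X.rank :=
  le_antisymm (rank_mul_le_right Xd X) <| by
    conv_lhs => rw [← h, Matrix.mul_assoc]
    exact rank_mul_le_right X _

lemma exists_vecMul_eq_of_mulVec_eq_zero {P : Matrix n n K} {A : Matrix m n K}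
    (hPA : P * Aᵀ = 0) (hrank : A.rank + P.rank = Fintype.card n) {u : n → K}
    (hu : P *ᵥ u = 0) : ∃ z, z ᵥ* A = u := by
  -- `range Aᵀ ≤ ker P`, and both have dimension `rank A`.
  have hle : LinearMap.range Aᵀ.mulVecLin ≤ LinearMap.ker P.mulVecLin := by
    rintro _ ⟨z, rfl⟩
    rw [LinearMap.mem_ker, mulVecLin_apply, mulVecLin_apply, mulVec_mulVec, hPA, zero_mulVec]
  have hker : Module.finrank K (LinearMap.ker P.mulVecLin) = A.rank := by
    have := LinearMap.finrank_range_add_finrank_ker P.mulVecLin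
    rw [Module.finrank_fintype_fun_eq_card] at this
    change P.rank + _ = _ at this
    omega
  have heq := Submodule.eq_of_le_of_finrank_le hle (by rw [hker, ← rank_transpose]; rfl)
  obtain ⟨z, hz⟩ : u ∈ LinearMap.range Aᵀ.mulVecLin := heq ▸ hu
  exact ⟨z, by rwa [mulVecLin_apply, mulVec_transpose] at hz⟩

lemma exists_vecMul_eq_sub_mulVec_of_mul_mul_eq {A : Matrix m n K} {X : Matrix k n K}
    {Xd : Matrix n k K} (h : X * Xd * X = X) (hXA : ∀ s, A *ᵥ X s = 0)
    (hrank : A.rank + X.rank = Fintype.card n) (L : n → K) :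
    ∃ z, z ᵥ* A = L - (Xd * X) *ᵥ L := by
  have hXAt : X * Aᵀ = 0 := by
    ext s i
    simpa [mul_apply, mulVec, dotProduct, mul_comm] using congrFun (hXA s) i
  have hidem : Xd * X * (Xd * X) = Xd * X := by
    rw [Matrix.mul_assoc, ← Matrix.mul_assoc X, h]
  refine exists_vecMul_eq_of_mulVec_eq_zero (P := Xd * X) ?_ ?_ ?_
  · rw [Matrix.mul_assoc, hXAt, Matrix.mul_zero]
  · rwa [rank_mul_eq_of_mul_mul_eq h]
  · rw [mulVec_sub, mulVec_mulVec, hidem, sub_self]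

end Matrix

theorem buckingham_rank_deficient_general (m n r k : ℕ) (A : Matrix (Fin m) (Fin n) ℝ)
    (hr : A.rank = r) (hk : k = n - r)
    (β : Fin m → ℝ) (y : Fin n → ℝ) (hy : A.mulVec y = β)
    (F : (Fin n → ℝ) → ℝ)
    (hF : ∀ v : Fin n → ℝ, (∀ j, 0 < v j) → ∀ c : Fin m → ℝ, (∀ i, 0 < c i) →
      F (scale A c v) = F v * ppow c β)
    (X : Matrix (Fin k) (Fin n) ℝ)
    (hXker : ∀ s, A.mulVec (X s) = 0)
    (hXind : LinearIndependent ℝ (fun s => X s))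
    (Xd : Matrix (Fin n) (Fin k) ℝ)
    (h1 : X * Xd * X = X)
    (ψ : (Fin k → ℝ) → (Fin n → ℝ))
    (hψ : ∀ w, ψ w = fun j => Real.exp (∑ t, Xd j t * Real.log (w t)))
    (G : (Fin k → ℝ) → ℝ) (hG : ∀ w, G w = F (ψ w) / ppow (ψ w) y) :
    ∀ v : Fin n → ℝ, (∀ j, 0 < v j) →
      F v = G (fun s => ppow v (X s)) * ppow v y := by
  intro v hv
  set L : Fin n → ℝ := fun j => Real.log (v j)
  set P := Xd * X
  have hrank : A.rank + X.rank = Fintype.card (Fin n) := by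
    rw [hXind.rank_matrix, Fintype.card_fin, Fintype.card_fin]
    have := A.rank_le_width
    omega
  obtain ⟨z, hz⟩ := exists_vecMul_eq_sub_mulVec_of_mul_mul_eq h1 hXker hrank L
  have hψv : ψ (fun s => ppow v (X s)) = fun j => Real.exp ((P *ᵥ L) j) := by
    simp only [hψ, log_ppow hv]
    funext j
    rw [← mulVec_mulVec]
    rfl
  have hv_eq : v = fun j => Real.exp ((P *ᵥ L) j + (z ᵥ* A) j) := by
    funext j
    rw [hz, Pi.sub_apply, add_sub_cancel, Real.exp_log (hv j)]
  have hβ : z ⬝ᵥ β = L ⬝ᵥ y - (P *ᵥ L) ⬝ᵥ y := by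
    rw [← hy, dotProduct_mulVec, hz, sub_dotProduct]
  have hvy : ppow v y = Real.exp (L ⬝ᵥ y) := by
    rw [← ppow_exp]
    exact congrArg (ppow · y) (funext fun j => (Real.exp_log (hv j)).symm)
  rw [hG, hψv, ppow_exp, hvy]
  conv_lhs => rw [hv_eq, apply_exp_add_vecMul hF, hβ, Real.exp_sub]
  field_simp

/-- Classical Buckingham Π-theorem, rank-deficient case: if `rank A = r < n`,
`k = n−r`, the rows of `X` form a basis of `ker A`, `Xd` is the Moore–Penrose
pseudoinverse of `X`, `Ayᵀ = βᵀ`, `F ∈ S(A,β)`, `πₛ(u) := u^{xₛ}`,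
`ψ(w) := exp(Xd·log(w)ᵀ)` and `G(w) := F(ψ(w))/ψ(w)^y`, then
`F(v) = G(π₁(v),…,π_k(v))·v^y` for every positive `v`. -/
theorem buckingham_rank_deficient (m n r k : ℕ) (A : Matrix (Fin m) (Fin n) ℝ)
    (hr : A.rank = r) (hrn : r < n) (hk : k = n - r)
    (β : Fin m → ℝ) (y : Fin n → ℝ) (hy : A.mulVec y = β)
    (F : (Fin n → ℝ) → ℝ)
    (hF : ∀ v : Fin n → ℝ, (∀ j, 0 < v j) → ∀ c : Fin m → ℝ, (∀ i, 0 < c i) →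
      F (scale A c v) = F v * ppow c β)
    (X : Matrix (Fin k) (Fin n) ℝ)
    (hXker : ∀ s, A.mulVec (X s) = 0)
    (hXind : LinearIndependent ℝ (fun s => X s))
    (Xd : Matrix (Fin n) (Fin k) ℝ)
    (h1 : X * Xd * X = X) (h2 : Xd * X * Xd = Xd)
    (h3 : (X * Xd)ᵀ = X * Xd) (h4 : (Xd * X)ᵀ = Xd * X)
    (ψ : (Fin k → ℝ) → (Fin n → ℝ))
    (hψ : ∀ w, ψ w = fun j => Real.exp (∑ t, Xd j t * Real.log (w t)))
    (G : (Fin k → ℝ) → ℝ) (hG : ∀ w, G w = F (ψ w) / ppow (ψ w) y) :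
    ∀ v : Fin n → ℝ, (∀ j, 0 < v j) →
      F v = G (fun s => ppow v (X s)) * ppow v y :=
  buckingham_rank_deficient_general m n r k A hr hk β y hy F hF X hXker hXind Xd h1 ψ hψ G hG
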